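/- arXiv:2106.10896 — 4 statements merged into one kernel-verified Lean document; each statement's English description precedes it below -/
import Mathlib

section
/- For the differential operators A_{2k} = -(1/2) Σ_{s=1}^{k} ∂_{2s-1}∂_{2k+1-2s} - Σ_{s≥1} (2s-1) z_{2s-1} ∂_{2s+2k-1} acting on polynomials in variables z_1, z_3, z_5, ..., the commutation relation [A_{2i}, A_{2j}] = 2(j-i) A_{2(i+j)} holds for all i, j ≥ 0. -/
open MvPolynomial

/-- The operator `A_{2k}` (index `k`), truncated: the infinite sum
`∑_{s≥1} (2s-1) z_{2s-1} ∂_{2s+2k-1}` is truncated to its first `n` terms.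
Variable with index `s : ℕ` represents `z_{2s+1}`. -/
noncomputable def Aop (k n : ℕ) (p : MvPolynomial ℕ ℚ) : MvPolynomial ℕ ℚ :=
  -(1/2 : ℚ) • ∑ s ∈ Finset.range k, pderiv s (pderiv (k - 1 - s) p)
    - ∑ s ∈ Finset.range n, (2 * (s : ℚ) + 1) • (X s * pderiv (s + k) p)

theorem pderiv_pderiv (a b : ℕ) (p : MvPolynomial ℕ ℚ) :
    pderiv a (pderiv b p) = pderiv b (pderiv a p) := by
  induction p using MvPolynomial.induction_on with
  | C c => simp
  | add p q hp hq => simp [hp, hq]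
  | mul_X p s hp =>
      simp [pderiv_mul, pderiv_X, hp, Pi.single_apply]
      split_ifs <;> (try simp only [map_zero]) <;> ring

lemma pderiv_rot (a b c : ℕ) (q : MvPolynomial ℕ ℚ) :
    pderiv a (pderiv b (pderiv c q)) = pderiv c (pderiv a (pderiv b q)) := by
  rw [pderiv_pderiv b c, pderiv_pderiv a c]

lemma pderiv4 (a b c d : ℕ) (q : MvPolynomial ℕ ℚ) :
    pderiv a (pderiv b (pderiv c (pderiv d q)))
      = pderiv c (pderiv d (pderiv a (pderiv b q))) := by
  rw [pderiv_rot a b c (pderiv d q), pderiv_rot a b d q]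

noncomputable def Sq (k : ℕ) (q : MvPolynomial ℕ ℚ) : MvPolynomial ℕ ℚ :=
  ∑ s ∈ Finset.range k, pderiv s (pderiv (k - 1 - s) q)

noncomputable def Tq (n k : ℕ) (q : MvPolynomial ℕ ℚ) : MvPolynomial ℕ ℚ :=
  ∑ s ∈ Finset.range n, (2 * (s : ℚ) + 1) • (X s * pderiv (s + k) q)

noncomputable def Fq (i j : ℕ) (q : MvPolynomial ℕ ℚ) : MvPolynomial ℕ ℚ :=
  ∑ a ∈ Finset.range i, (2 * (a : ℚ) + 1) • pderiv (i - 1 - a) (pderiv (a + j) q)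

lemma Aop_eq (k n : ℕ) (p : MvPolynomial ℕ ℚ) :
    Aop k n p = -(1/2 : ℚ) • Sq k p - Tq n k p := rfl

lemma Sq_sub (k : ℕ) (x y : MvPolynomial ℕ ℚ) : Sq k (x - y) = Sq k x - Sq k y := by
  simp [Sq, Finset.sum_sub_distrib]

lemma Sq_smul (k : ℕ) (c : ℚ) (x : MvPolynomial ℕ ℚ) : Sq k (c • x) = c • Sq k x := by
  simp [Sq, Finset.smul_sum]

lemma Tq_sub (n k : ℕ) (x y : MvPolynomial ℕ ℚ) : Tq n k (x - y) = Tq n k x - Tq n k y := by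
  simp [Tq, Finset.sum_sub_distrib, mul_sub, smul_sub]

lemma Tq_smul (n k : ℕ) (c : ℚ) (x : MvPolynomial ℕ ℚ) : Tq n k (c • x) = c • Tq n k x := by
  simp [Tq, Finset.smul_sum, smul_smul, mul_comm]

lemma Sq_Sq (i j : ℕ) (p : MvPolynomial ℕ ℚ) : Sq i (Sq j p) = Sq j (Sq i p) := by
  simp only [Sq, map_sum]
  rw [Finset.sum_comm]
  exact Finset.sum_congr rfl fun b _ => Finset.sum_congr rfl fun a _ => pderiv4 _ _ _ _ _

lemma basic1 (a b s c : ℕ) (q : MvPolynomial ℕ ℚ) :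
    pderiv a (pderiv b (X s * pderiv c q)) - X s * pderiv c (pderiv a (pderiv b q))
      = (if a = s then pderiv b (pderiv c q) else 0)
        + (if b = s then pderiv a (pderiv c q) else 0) := by
  have hrot : pderiv c (pderiv a (pderiv b q)) = pderiv a (pderiv b (pderiv c q)) :=
    (pderiv_rot a b c q).symm
  by_cases h1 : a = s <;> by_cases h2 : b = s <;>
    simp [pderiv_mul, h1, h2, hrot, pderiv_pderiv] <;> ring

lemma ST_p (i j n : ℕ) (hin : i ≤ n) (p : MvPolynomial ℕ ℚ) :
    Sq i (Tq n j p) - Tq n j (Sq i p) = (2 : ℚ) • Fq i j p := by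
  have step1 : Sq i (Tq n j p) = ∑ a ∈ Finset.range i, ∑ s ∈ Finset.range n,
      (2 * (s : ℚ) + 1) • pderiv a (pderiv (i - 1 - a) (X s * pderiv (s + j) p)) := by
    simp only [Sq, Tq, map_sum, map_smul, Derivation.map_smul]
  have step2 : Tq n j (Sq i p) = ∑ a ∈ Finset.range i, ∑ s ∈ Finset.range n,
      (2 * (s : ℚ) + 1) • (X s * pderiv (s + j) (pderiv a (pderiv (i - 1 - a) p))) := by
    simp only [Tq, Sq, map_sum, Finset.mul_sum, Finset.smul_sum]
    rw [Finset.sum_comm]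
  rw [step1, step2, ← Finset.sum_sub_distrib]
  have inner : ∀ a ∈ Finset.range i,
      (∑ s ∈ Finset.range n,
          (2 * (s : ℚ) + 1) • pderiv a (pderiv (i - 1 - a) (X s * pderiv (s + j) p)))
        - ∑ s ∈ Finset.range n,
          (2 * (s : ℚ) + 1) • (X s * pderiv (s + j) (pderiv a (pderiv (i - 1 - a) p)))
      = (2 * (a : ℚ) + 1) • pderiv (i - 1 - a) (pderiv (a + j) p)
        + (2 * ((i - 1 - a : ℕ) : ℚ) + 1) • pderiv a (pderiv ((i - 1 - a) + j) p) := by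
    intro a ha
    rw [← Finset.sum_sub_distrib]
    have : ∀ s ∈ Finset.range n,
        (2 * (s : ℚ) + 1) • pderiv a (pderiv (i - 1 - a) (X s * pderiv (s + j) p))
          - (2 * (s : ℚ) + 1) • (X s * pderiv (s + j) (pderiv a (pderiv (i - 1 - a) p)))
        = (if a = s then (2 * (s : ℚ) + 1) • pderiv (i - 1 - a) (pderiv (s + j) p) else 0)
          + (if i - 1 - a = s then (2 * (s : ℚ) + 1) • pderiv a (pderiv (s + j) p) else 0) := by
      intro s hs
      rw [← smul_sub, basic1]
      simp only [smul_add, smul_ite, smul_zero]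
    rw [Finset.sum_congr rfl this, Finset.sum_add_distrib, Finset.sum_ite_eq, Finset.sum_ite_eq]
    have ha' : a < i := Finset.mem_range.mp ha
    rw [if_pos (Finset.mem_range.mpr (lt_of_lt_of_le ha' hin)),
      if_pos (Finset.mem_range.mpr (by omega : i - 1 - a < n))]
  rw [Finset.sum_congr rfl inner, Finset.sum_add_distrib]
  have refl1 : ∑ a ∈ Finset.range i,
      (2 * ((i - 1 - a : ℕ) : ℚ) + 1) • pderiv a (pderiv ((i - 1 - a) + j) p)
      = ∑ a ∈ Finset.range i, (2 * (a : ℚ) + 1) • pderiv (i - 1 - a) (pderiv (a + j) p) := by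
    rw [← Finset.sum_range_reflect
      (fun a => (2 * (a : ℚ) + 1) • pderiv (i - 1 - a) (pderiv (a + j) p)) i]
    refine Finset.sum_congr rfl fun a ha => ?_
    have ha' : a < i := Finset.mem_range.mp ha
    have h1 : i - 1 - (i - 1 - a) = a := by omega
    rw [h1]
  rw [refl1, Fq, two_smul]

lemma TT_p (i j n N₀ : ℕ) (p : MvPolynomial ℕ ℚ)
    (hvan : ∀ m, N₀ ≤ m → pderiv m p = 0) (hn : N₀ + i + j ≤ n) :
    Tq n i (Tq n j p) - Tq n j (Tq n i p) = (2 * ((i : ℚ) - (j : ℚ))) • Tq n (i + j) p := by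
  have expand : ∀ i' j' : ℕ, N₀ + i' + j' ≤ n → Tq n i' (Tq n j' p)
      = (∑ s ∈ Finset.range n, ∑ t ∈ Finset.range n,
          ((2 * (s : ℚ) + 1) * (2 * (t : ℚ) + 1)) •
            (X s * (X t * pderiv (s + i') (pderiv (t + j') p))))
        + ∑ s ∈ Finset.range n,
            ((2 * (s : ℚ) + 1) * (2 * ((s + i' : ℕ) : ℚ) + 1)) •
              (X s * pderiv (s + i' + j') p) := by
    intro i' j' hn'
    have e1 : Tq n i' (Tq n j' p) = ∑ s ∈ Finset.range n, ∑ t ∈ Finset.range n,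
        ((2 * (s : ℚ) + 1) * (2 * (t : ℚ) + 1)) •
          (X s * pderiv (s + i') (X t * pderiv (t + j') p)) := by
      simp only [Tq, map_sum, Derivation.map_smul, Finset.mul_sum, Finset.smul_sum,
        smul_smul, mul_smul_comm]
    rw [e1]
    rw [← Finset.sum_add_distrib]
    refine Finset.sum_congr rfl fun s hs => ?_
    have hsplit : ∀ t, pderiv (s + i') (X t * pderiv (t + j') p)
        = (if s + i' = t then (1 : MvPolynomial ℕ ℚ) else 0) * pderiv (t + j') p
          + X t * pderiv (s + i') (pderiv (t + j') p) := by
      intro t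
      rw [pderiv_mul]
      by_cases h : s + i' = t
      · subst h; simp
      · have h' : t ≠ s + i' := fun hh => h hh.symm
        simp [h, pderiv_X_of_ne h']
    have : ∀ t ∈ Finset.range n,
        ((2 * (s : ℚ) + 1) * (2 * (t : ℚ) + 1)) • (X s * pderiv (s + i') (X t * pderiv (t + j') p))
        = ((2 * (s : ℚ) + 1) * (2 * (t : ℚ) + 1)) •
            (X s * (X t * pderiv (s + i') (pderiv (t + j') p)))
          + (if s + i' = t then ((2 * (s : ℚ) + 1) * (2 * (t : ℚ) + 1)) •
              (X s * pderiv (t + j') p) else 0) := by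
      intro t ht
      rw [hsplit t]
      rw [mul_add (X s), smul_add, add_comm]
      congr 1
      by_cases h : s + i' = t <;> simp [h]
    rw [Finset.sum_congr rfl this, Finset.sum_add_distrib, Finset.sum_ite_eq]
    congr 1
    by_cases hlt : s + i' < n
    · rw [if_pos (Finset.mem_range.mpr hlt)]
    · rw [if_neg (fun hm => hlt (Finset.mem_range.mp hm))]
      have hz : pderiv (s + i' + j') p = 0 := by
        refine hvan _ ?_
        have : n ≤ s + i' := le_of_not_gt hlt
        omega
      rw [hz, mul_zero, smul_zero]
  rw [expand i j (by omega), expand j i (by omega)]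
  have hQ : (∑ s ∈ Finset.range n, ∑ t ∈ Finset.range n,
        ((2 * (s : ℚ) + 1) * (2 * (t : ℚ) + 1)) •
          (X s * (X t * pderiv (s + i) (pderiv (t + j) p))))
      = ∑ s ∈ Finset.range n, ∑ t ∈ Finset.range n,
        ((2 * (s : ℚ) + 1) * (2 * (t : ℚ) + 1)) •
          (X s * (X t * pderiv (s + j) (pderiv (t + i) p))) := by
    rw [Finset.sum_comm]
    refine Finset.sum_congr rfl fun s _ => Finset.sum_congr rfl fun t _ => ?_
    rw [mul_comm (2 * (t : ℚ) + 1), mul_left_comm, pderiv_pderiv]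
  rw [hQ]
  rw [add_sub_add_left_eq_sub, ← Finset.sum_sub_distrib]
  rw [Tq, Finset.smul_sum]
  refine Finset.sum_congr rfl fun s hs => ?_
  have hidx1 : s + j + i = s + i + j := by omega
  have hidx2 : s + (i + j) = s + i + j := by omega
  rw [hidx1, hidx2, ← sub_smul, smul_smul]
  congr 1
  push_cast
  ring

lemma Fq_eq_lt (i j : ℕ) (p : MvPolynomial ℕ ℚ) :
    Fq i j p = ∑ c ∈ Finset.range (i + j),
      (if c < i then (2 * (i : ℚ) - 2 * c - 1) else 0) • pderiv c (pderiv (i + j - 1 - c) p) := by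
  have hrefl : Fq i j p = ∑ a ∈ Finset.range i,
      (2 * (i : ℚ) - 2 * a - 1) • pderiv a (pderiv (i + j - 1 - a) p) := by
    rw [Fq, ← Finset.sum_range_reflect
      (fun a => (2 * (i : ℚ) - 2 * (a : ℚ) - 1) • pderiv a (pderiv (i + j - 1 - a) p)) i]
    refine Finset.sum_congr rfl fun a ha => ?_
    have ha' : a < i := Finset.mem_range.mp ha
    have h1 : i + j - 1 - (i - 1 - a) = a + j := by omega
    have h2 : ((i - 1 - a : ℕ) : ℚ) = (i : ℚ) - 1 - (a : ℚ) := by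
      rw [Nat.cast_sub (by omega), Nat.cast_sub (by omega)]
      push_cast
      ring
    rw [h1, h2]
    congr 1
    ring
  rw [hrefl]
  rw [← Finset.sum_subset (Finset.range_subset_range.mpr (Nat.le_add_right i j))
    (fun c _ hc => by
      rw [if_neg (fun hci => hc (Finset.mem_range.mpr (by omega))), zero_smul])]
  refine Finset.sum_congr rfl fun a ha => ?_
  rw [if_pos (Finset.mem_range.mp ha)]

lemma Fq_eq_le (i j : ℕ) (p : MvPolynomial ℕ ℚ) :
    Fq i j p = ∑ c ∈ Finset.range (i + j),
      (if j ≤ c then (2 * (c : ℚ) - 2 * j + 1) else 0) • pderiv c (pderiv (i + j - 1 - c) p) := by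
  have h1 : Fq i j p = ∑ a ∈ Finset.range i,
      (2 * ((j + a : ℕ) : ℚ) - 2 * j + 1) • pderiv (j + a) (pderiv (i + j - 1 - (j + a)) p) := by
    rw [Fq]
    refine Finset.sum_congr rfl fun a ha => ?_
    have ha' : a < i := Finset.mem_range.mp ha
    have e1 : i + j - 1 - (j + a) = i - 1 - a := by omega
    have e2 : a + j = j + a := by omega
    rw [e1, e2, pderiv_pderiv]
    congr 1
    push_cast
    ring
  have h2 : ∑ c ∈ Finset.Ico j (j + i),
      (2 * (c : ℚ) - 2 * j + 1) • pderiv c (pderiv (i + j - 1 - c) p)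
      = ∑ a ∈ Finset.range i,
        (2 * ((j + a : ℕ) : ℚ) - 2 * j + 1) • pderiv (j + a) (pderiv (i + j - 1 - (j + a)) p) := by
    rw [Finset.sum_Ico_eq_sum_range]
    simp only [Nat.add_sub_cancel_left]
  rw [h1, ← h2]
  have hsub : Finset.Ico j (j + i) ⊆ Finset.range (i + j) := by
    intro c hc
    rw [Finset.mem_Ico] at hc
    exact Finset.mem_range.mpr (by omega)
  have hzero : ∀ c ∈ Finset.range (i + j), c ∉ Finset.Ico j (j + i) →
      (if j ≤ c then (2 * (c : ℚ) - 2 * j + 1) else 0) • pderiv c (pderiv (i + j - 1 - c) p)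
        = 0 := by
    intro c hc hcn
    rw [Finset.mem_range] at hc
    rw [Finset.mem_Ico] at hcn
    rw [if_neg (by omega), zero_smul]
  rw [← Finset.sum_subset hsub hzero]
  refine Finset.sum_congr rfl fun c hc => ?_
  rw [Finset.mem_Ico] at hc
  rw [if_pos hc.1]

lemma Fdiff (i j : ℕ) (p : MvPolynomial ℕ ℚ) :
    Fq i j p - Fq j i p = ((i : ℚ) - (j : ℚ)) • Sq (i + j) p := by
  have hcomm : j + i = i + j := by omega
  have key : (2 : ℚ) • (Fq i j p - Fq j i p)
      = (2 : ℚ) • (((i : ℚ) - (j : ℚ)) • Sq (i + j) p) := by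
    have eA := Fq_eq_lt i j p
    have eB := Fq_eq_le i j p
    have eC := Fq_eq_lt j i p
    have eD := Fq_eq_le j i p
    rw [hcomm] at eC eD
    calc (2 : ℚ) • (Fq i j p - Fq j i p)
        = (Fq i j p + Fq i j p) - (Fq j i p + Fq j i p) := by
          rw [two_smul]; abel
      _ = ∑ c ∈ Finset.range (i + j),
            ((2 * (i : ℚ) - 2 * (j : ℚ)) • pderiv c (pderiv (i + j - 1 - c) p)) := by
          nth_rewrite 1 [eA]
          nth_rewrite 1 [eB]
          nth_rewrite 1 [eC]
          nth_rewrite 1 [eD]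
          rw [← Finset.sum_add_distrib, ← Finset.sum_add_distrib, ← Finset.sum_sub_distrib]
          refine Finset.sum_congr rfl fun c hc => ?_
          rw [← add_smul, ← add_smul, ← sub_smul]
          congr 1
          split_ifs <;> (try (exfalso; omega)) <;> ring
      _ = (2 : ℚ) • (((i : ℚ) - (j : ℚ)) • Sq (i + j) p) := by
          rw [← Finset.smul_sum, Sq, smul_smul]
          congr 1
          ring
  have h2 := congrArg (fun z : MvPolynomial ℕ ℚ => ((2 : ℚ)⁻¹) • z) key
  simp only [smul_smul] at h2
  norm_num at h2
  convert h2 using 2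
  ring

/-- `[A_{2i}, A_{2j}] = 2(j-i) A_{2(i+j)}`: on any given polynomial, the identity holds
for every sufficiently large truncation (the sums are locally finite). -/
theorem witt_relation_A (i j : ℕ) (p : MvPolynomial ℕ ℚ) :
    ∃ N : ℕ, ∀ n ≥ N,
      Aop i n (Aop j n p) - Aop j n (Aop i n p)
        = (2 * ((j : ℚ) - (i : ℚ))) • Aop (i + j) n p := by
  set N₀ := p.vars.sup id + 1 with hN₀
  have hvan : ∀ m, N₀ ≤ m → pderiv m p = 0 := by
    intro m hm
    apply pderiv_eq_zero_of_notMem_vars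
    intro hmem
    have := Finset.le_sup (f := id) hmem
    simp only [id] at this
    omega
  refine ⟨N₀ + i + j, fun n hn => ?_⟩
  have hin : i ≤ n := by omega
  have hjn : j ≤ n := by omega
  have hST1' : Sq i (Tq n j p) = Tq n j (Sq i p) + (2 : ℚ) • Fq i j p :=
    sub_eq_iff_eq_add'.mp (ST_p i j n hin p)
  have hST2' : Sq j (Tq n i p) = Tq n i (Sq j p) + (2 : ℚ) • Fq j i p :=
    sub_eq_iff_eq_add'.mp (ST_p j i n hjn p)
  have hTT' : Tq n i (Tq n j p)
      = Tq n j (Tq n i p) + (2 * ((i : ℚ) - (j : ℚ))) • Tq n (i + j) p :=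
    sub_eq_iff_eq_add'.mp (TT_p i j n N₀ p hvan (by omega))
  have hF' : Fq i j p = Fq j i p + ((i : ℚ) - (j : ℚ)) • Sq (i + j) p :=
    sub_eq_iff_eq_add'.mp (Fdiff i j p)
  have hSS := Sq_Sq i j p
  simp only [Aop_eq, Sq_sub, Sq_smul, Tq_sub, Tq_smul]
  rw [hSS, hST1', hST2', hTT', hF']
  module
end

section
/- The polynomial m_3(z_1, z_3, z_5) = z_1⁶ - 15 z_1³ z_3 + 45 z_1 z_5 - 45 z_3² satisfies Ĥ_0 m_3 = 0, Ĥ_2 m_3 = 0, and Ĥ_4 m_3 = 0, where Ĥ_0 = z_1 ∂_1 + 3 z_3 ∂_3 + 5 z_5 ∂_5 - 6, Ĥ_2 = (1/2) ∂_1² + z_1 ∂_3 + 3 z_3 ∂_5, and Ĥ_4 = ∂_1 ∂_3 + z_1 ∂_5. -/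
open MvPolynomial

/-- The genus-3 rational limit: variables `0, 1, 2` are `z₁, z₃, z₅`. -/
noncomputable def m3 : MvPolynomial (Fin 3) ℚ :=
  X 0 ^ 6 - C 15 * X 0 ^ 3 * X 1 + C 45 * X 0 * X 2 - C 45 * X 1 ^ 2

/-- `m₃ = z₁⁶ - 15 z₁³ z₃ + 45 z₁ z₅ - 45 z₃²` satisfies `Ĥ₀ m₃ = Ĥ₂ m₃ = Ĥ₄ m₃ = 0`, where
`Ĥ₀ = z₁∂₁ + 3z₃∂₃ + 5z₅∂₅ - 6`, `Ĥ₂ = (1/2)∂₁² + z₁∂₃ + 3z₃∂₅`, `Ĥ₄ = ∂₁∂₃ + z₁∂₅`. -/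
theorem m3_solution :
    X 0 * pderiv 0 m3 + C 3 * X 1 * pderiv 1 m3 + C 5 * X 2 * pderiv 2 m3 - C 6 * m3 = 0 ∧
    C (1/2 : ℚ) * pderiv 0 (pderiv 0 m3) + X 0 * pderiv 1 m3 + C 3 * X 1 * pderiv 2 m3 = 0 ∧
    pderiv 0 (pderiv 1 m3) + X 0 * pderiv 2 m3 = 0 := by
  have hd : ∀ (i : Fin 3) (n : ℕ) [n.AtLeastTwo],
      pderiv i ((OfNat.ofNat n : MvPolynomial (Fin 3) ℚ)) = 0 := by
    intro i n _
    rw [← map_ofNat (C : ℚ →+* MvPolynomial (Fin 3) ℚ) n, pderiv_C]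
  have hhalf : (2 : MvPolynomial (Fin 3) ℚ) * C ((2:ℚ)⁻¹) = 1 := by
    rw [← map_ofNat (C : ℚ →+* MvPolynomial (Fin 3) ℚ) 2, ← C_mul]
    norm_num
  refine ⟨?_, ?_, ?_⟩
  · simp only [m3, map_sub, map_add, Derivation.leibniz, pderiv_X, pderiv_C,
      Derivation.leibniz_pow, Derivation.map_smul, map_mul]
    simp [Fin.isValue, smul_eq_mul, hd, map_ofNat]
    ring
  · simp only [m3, map_sub, map_add, Derivation.leibniz, pderiv_X, pderiv_C,
      Derivation.leibniz_pow, Derivation.map_smul, map_mul]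
    simp only [one_div]
    simp [Fin.isValue, smul_eq_mul, hd, map_ofNat]
    linear_combination (15 * X 0 ^ 4 - 45 * X 0 * X 1) * hhalf
  · simp only [m3, map_sub, map_add, Derivation.leibniz, pderiv_X, pderiv_C,
      Derivation.leibniz_pow, Derivation.map_smul, map_mul]
    simp [Fin.isValue, smul_eq_mul, hd, map_ofNat]
    ring
end

section
/- The polynomial m_4(z) = z_1^{10} - 45 z_1^7 z_3 + 315 z_1^5 z_5 - 1575 z_1^3 z_7 + 4725 z_1^2 z_3 z_5 - 4725 z_1 z_3^3 + 4725 z_3 z_7 - 4725 z_5^2 satisfies Ĥ_0 m_4 = 0, Ĥ_2 m_4 = 0, and Ĥ_4 m_4 = 0, where Ĥ_0 = z_1∂_1 + 3z_3∂_3 + 5z_5∂_5 + 7z_7∂_7 - 10, Ĥ_2 = (1/2)∂_1² + z_1∂_3 + 3z_3∂_5 + 5z_5∂_7, Ĥ_4 = ∂_1∂_3 + z_1∂_5 + 3z_3∂_7. -/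
open MvPolynomial

/-- The genus-4 rational limit: variables `0, 1, 2, 3` are `z₁, z₃, z₅, z₇`. -/
noncomputable def m4 : MvPolynomial (Fin 4) ℚ :=
  X 0 ^ 10 - C 45 * X 0 ^ 7 * X 1 + C 315 * X 0 ^ 5 * X 2 - C 1575 * X 0 ^ 3 * X 3
    + C 4725 * X 0 ^ 2 * X 1 * X 2 - C 4725 * X 0 * X 1 ^ 3 + C 4725 * X 1 * X 3
    - C 4725 * X 2 ^ 2

lemma pd0 : pderiv 0 m4 = C 10 * X 0 ^ 9 - C 315 * X 0 ^ 6 * X 1 + C 1575 * X 0 ^ 4 * X 2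
    - C 4725 * X 0 ^ 2 * X 3 + C 9450 * X 0 * X 1 * X 2 - C 4725 * X 1 ^ 3 := by
  simp [m4, pderiv_X_self, pderiv_X_of_ne (by decide : (1:Fin 4) ≠ 0),
    pderiv_X_of_ne (by decide : (2:Fin 4) ≠ 0), pderiv_X_of_ne (by decide : (3:Fin 4) ≠ 0)]
  simp only [map_ofNat]
  ring

lemma pd1 : pderiv 1 m4 = - (C 45 * X 0 ^ 7) + C 4725 * X 0 ^ 2 * X 2
    - C 14175 * X 0 * X 1 ^ 2 + C 4725 * X 3 := by
  simp [m4, pderiv_X_self, pderiv_X_of_ne (by decide : (0:Fin 4) ≠ 1),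
    pderiv_X_of_ne (by decide : (2:Fin 4) ≠ 1), pderiv_X_of_ne (by decide : (3:Fin 4) ≠ 1)]
  simp only [map_ofNat]
  ring

lemma pd2 : pderiv 2 m4 = C 315 * X 0 ^ 5 + C 4725 * X 0 ^ 2 * X 1 - C 9450 * X 2 := by
  simp [m4, pderiv_X_self, pderiv_X_of_ne (by decide : (0:Fin 4) ≠ 2),
    pderiv_X_of_ne (by decide : (1:Fin 4) ≠ 2), pderiv_X_of_ne (by decide : (3:Fin 4) ≠ 2)]
  simp only [map_ofNat]
  ring

lemma pd3 : pderiv 3 m4 = - (C 1575 * X 0 ^ 3) + C 4725 * X 1 := by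
  simp [m4, pderiv_X_self, pderiv_X_of_ne (by decide : (0:Fin 4) ≠ 3),
    pderiv_X_of_ne (by decide : (1:Fin 4) ≠ 3), pderiv_X_of_ne (by decide : (2:Fin 4) ≠ 3)]

lemma pd00 : pderiv 0 (pderiv 0 m4) = C 90 * X 0 ^ 8 - C 1890 * X 0 ^ 5 * X 1
    + C 6300 * X 0 ^ 3 * X 2 - C 9450 * X 0 * X 3 + C 9450 * X 1 * X 2 := by
  rw [pd0]
  simp [pderiv_X_self, pderiv_X_of_ne (by decide : (1:Fin 4) ≠ 0),
    pderiv_X_of_ne (by decide : (2:Fin 4) ≠ 0), pderiv_X_of_ne (by decide : (3:Fin 4) ≠ 0)]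
  simp only [map_ofNat]
  ring

lemma pd01 : pderiv 0 (pderiv 1 m4) = - (C 315 * X 0 ^ 6) + C 9450 * X 0 * X 2
    - C 14175 * X 1 ^ 2 := by
  rw [pd1]
  simp [pderiv_X_self, pderiv_X_of_ne (by decide : (1:Fin 4) ≠ 0),
    pderiv_X_of_ne (by decide : (2:Fin 4) ≠ 0), pderiv_X_of_ne (by decide : (3:Fin 4) ≠ 0)]
  simp only [map_ofNat]
  ring

lemma Chalf : (C (1/2 : ℚ) : MvPolynomial (Fin 4) ℚ) * C 2 = 1 := by
  rw [← C_mul]; norm_num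

/-- `m₄` satisfies `Ĥ₀ m₄ = Ĥ₂ m₄ = Ĥ₄ m₄ = 0`, where
`Ĥ₀ = z₁∂₁ + 3z₃∂₃ + 5z₅∂₅ + 7z₇∂₇ - 10`,
`Ĥ₂ = (1/2)∂₁² + z₁∂₃ + 3z₃∂₅ + 5z₅∂₇`, `Ĥ₄ = ∂₁∂₃ + z₁∂₅ + 3z₃∂₇`. -/
theorem m4_solution :
    X 0 * pderiv 0 m4 + C 3 * X 1 * pderiv 1 m4 + C 5 * X 2 * pderiv 2 m4
        + C 7 * X 3 * pderiv 3 m4 - C 10 * m4 = 0 ∧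
    C (1/2 : ℚ) * pderiv 0 (pderiv 0 m4) + X 0 * pderiv 1 m4 + C 3 * X 1 * pderiv 2 m4
        + C 5 * X 2 * pderiv 3 m4 = 0 ∧
    pderiv 0 (pderiv 1 m4) + X 0 * pderiv 2 m4 + C 3 * X 1 * pderiv 3 m4 = 0 := by
  refine ⟨?_, ?_, ?_⟩
  · rw [pd0, pd1, pd2, pd3]
    simp only [m4, map_ofNat]
    ring
  · rw [pd00, pd1, pd2, pd3]
    have h2 : (C 2 : MvPolynomial (Fin 4) ℚ) ≠ 0 := by simp
    apply mul_left_cancel₀ h2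
    rw [mul_zero, mul_add, mul_add, mul_add, ← mul_assoc,
      show (C 2 : MvPolynomial (Fin 4) ℚ) * C (1/2) = 1 by rw [← C_mul]; norm_num, one_mul]
    simp only [map_ofNat]
    ring
  · rw [pd01, pd2, pd3]
    simp only [map_ofNat]
    ring
end

section
/- The genus-3 hyperelliptic Schur polynomial Sh_3 = e_3 e_2 e_1 + e_5 e_1 - e_4 e_1² - e_3², when expressed in power sums via Newton's identities, equals (1/45)(p_1⁶ - 5 p_1³ p_3 + 9 p_1 p_5 - 5 p_3²); in particular it depends only on the odd power sums p_1, p_3, p_5. -/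
/-!
Newton's identities express `p₁, …, p₅` as integer polynomials in `e₁, …, e₅`. Substituting them,
`p₁⁶ - 5p₁³p₃ + 9p₁p₅ - 5p₃²` becomes `45 · Sh₃` identically, over any commutative ring;
over `ℚ` one then divides by `45`.
-/

open Finset MvPolynomial

namespace MvPolynomial

variable (σ R : Type*) [Fintype σ] [CommRing R]

theorem psum_succ_eq_esymm_add_sum_range (k : ℕ) :
    psum σ R (k + 1) = (-1) ^ k * (k + 1) * esymm σ R (k + 1) +
      ∑ i ∈ range k, (-1) ^ i * esymm σ R (i + 1) * psum σ R (k - i) := by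
  rw [psum_eq_mul_esymm_sub_sum σ R (k + 1) k.succ_pos, sum_filter,
    Nat.sum_antidiagonal_eq_sum_range_succ_mk, sum_range_succ, sum_range_succ']
  simp only [Set.mem_Ioo, lt_self_iff_false, and_false, if_false, add_zero, false_and]
  rw [sum_congr rfl fun i hi => if_pos ⟨i.succ_pos, by simpa using hi⟩]
  simp only [pow_succ, Nat.cast_add, Nat.cast_one, Nat.add_sub_add_right, mul_neg, mul_one,
    neg_mul, sum_neg_distrib, neg_neg, sub_neg_eq_add]

theorem psum_one_eq_esymm : psum σ R 1 = esymm σ R 1 := by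
  rw [psum_one, esymm_one]

theorem psum_two_eq_esymm : psum σ R 2 = esymm σ R 1 ^ 2 - 2 * esymm σ R 2 := by
  rw [psum_succ_eq_esymm_add_sum_range σ R 1]
  simp only [sum_range_one, Nat.reduceSub, psum_one_eq_esymm]
  push_cast
  ring

theorem psum_three_eq_esymm :
    psum σ R 3 = esymm σ R 1 ^ 3 - 3 * esymm σ R 1 * esymm σ R 2 + 3 * esymm σ R 3 := by
  rw [psum_succ_eq_esymm_add_sum_range σ R 2]
  simp only [sum_range_succ, sum_range_zero, Nat.reduceSub, psum_one_eq_esymm, psum_two_eq_esymm]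
  push_cast
  ring

theorem psum_four_eq_esymm :
    psum σ R 4 = esymm σ R 1 ^ 4 - 4 * esymm σ R 1 ^ 2 * esymm σ R 2 + 2 * esymm σ R 2 ^ 2
      + 4 * esymm σ R 1 * esymm σ R 3 - 4 * esymm σ R 4 := by
  rw [psum_succ_eq_esymm_add_sum_range σ R 3]
  simp only [sum_range_succ, sum_range_zero, Nat.reduceSub, psum_one_eq_esymm, psum_two_eq_esymm,
    psum_three_eq_esymm]
  push_cast
  ring

theorem psum_five_eq_esymm :
    psum σ R 5 = esymm σ R 1 ^ 5 - 5 * esymm σ R 1 ^ 3 * esymm σ R 2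
      + 5 * esymm σ R 1 * esymm σ R 2 ^ 2 + 5 * esymm σ R 1 ^ 2 * esymm σ R 3
      - 5 * esymm σ R 2 * esymm σ R 3 - 5 * esymm σ R 1 * esymm σ R 4 + 5 * esymm σ R 5 := by
  rw [psum_succ_eq_esymm_add_sum_range σ R 4]
  simp only [sum_range_succ, sum_range_zero, Nat.reduceSub, psum_one_eq_esymm, psum_two_eq_esymm,
    psum_three_eq_esymm, psum_four_eq_esymm]
  push_cast
  ring

theorem psum_schurWeierstrass_three_eq :
    psum σ R 1 ^ 6 - 5 * psum σ R 1 ^ 3 * psum σ R 3 + 9 * psum σ R 1 * psum σ R 5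
        - 5 * psum σ R 3 ^ 2 =
      45 * (esymm σ R 3 * esymm σ R 2 * esymm σ R 1 + esymm σ R 5 * esymm σ R 1
        - esymm σ R 4 * esymm σ R 1 ^ 2 - esymm σ R 3 ^ 2) := by
  rw [psum_one_eq_esymm, psum_three_eq_esymm, psum_five_eq_esymm]
  ring

end MvPolynomial

/-- The genus-3 hyperelliptic Schur polynomial `Sh₃ = e₃e₂e₁ + e₅e₁ - e₄e₁² - e₃²` equals
`(1/45)(p₁⁶ - 5 p₁³ p₃ + 9 p₁ p₅ - 5 p₃²)` in terms of power sums; in particular it depends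
only on the odd power sums `p₁, p₃, p₅`. -/
theorem schur3_in_psums (n : ℕ) :
    esymm (Fin n) ℚ 3 * esymm (Fin n) ℚ 2 * esymm (Fin n) ℚ 1
        + esymm (Fin n) ℚ 5 * esymm (Fin n) ℚ 1
        - esymm (Fin n) ℚ 4 * esymm (Fin n) ℚ 1 ^ 2
        - esymm (Fin n) ℚ 3 ^ 2
      = C (1/45 : ℚ) * (psum (Fin n) ℚ 1 ^ 6
          - 5 * psum (Fin n) ℚ 1 ^ 3 * psum (Fin n) ℚ 3
          + 9 * psum (Fin n) ℚ 1 * psum (Fin n) ℚ 5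
          - 5 * psum (Fin n) ℚ 3 ^ 2) := by
  rw [psum_schurWeierstrass_three_eq, ← mul_assoc, ← map_ofNat C 45, ← C_mul]
  norm_num
end
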